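/- Let b, c ∈ (0, 1/2] and set a1 = a2 = b, a3 = c. Then positive reals x1, x2, x3 satisfy system (S) if and only if they satisfy the system: (x2 - x1)*(x3 - 2*b*(x1 + x2)) = 0 and x2*(x3 - x1) + (b + c)*(x1^2 - x3^2) + (c - b)*x2^2 = 0. -/
import Mathlib


noncomputable section
open Real Set

/-- First equation of system (S). -/
def eqS1 (a1 a2 a3 x1 x2 x3 : ℝ) : Prop :=
  (a2 + a3)*(a1*x2^2 + a1*x3^2 - x2*x3) + (a2*x2 + a3*x3)*x1
    - (a1*a2 + a1*a3 + 2*a2*a3)*x1^2 = 0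

/-- Second equation of system (S). -/
def eqS2 (a1 a2 a3 x1 x2 x3 : ℝ) : Prop :=
  (a1 + a3)*(a2*x1^2 + a2*x3^2 - x1*x3) + (a1*x1 + a3*x3)*x2
    - (a1*a2 + 2*a1*a3 + a2*a3)*x2^2 = 0

theorem two_equal_parameters_system_equiv (b c : ℝ)
    (hb : b ∈ Ioc (0:ℝ) (1/2)) (hc : c ∈ Ioc (0:ℝ) (1/2))
    (x1 x2 x3 : ℝ) (hx1 : 0 < x1) (hx2 : 0 < x2) (hx3 : 0 < x3) :
    (eqS1 b b c x1 x2 x3 ∧ eqS2 b b c x1 x2 x3) ↔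
      ((x2 - x1)*(x3 - 2*b*(x1 + x2)) = 0 ∧
        x2*(x3 - x1) + (b + c)*(x1^2 - x3^2) + (c - b)*x2^2 = 0) := by
  obtain ⟨hb0, -⟩ := hb
  obtain ⟨hc0, -⟩ := hc
  have hbc : b + 2*c ≠ 0 := by positivity
  have hbne : b ≠ 0 := ne_of_gt hb0
  unfold eqS1 eqS2
  constructor
  · rintro ⟨h1, h2⟩
    have hF1 : (x2 - x1)*(x3 - 2*b*(x1 + x2)) = 0 := by
      have key : (b + 2*c) * ((x2 - x1)*(x3 - 2*b*(x1 + x2))) = -(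
        ((b + c)*(b*x2^2 + b*x3^2 - x2*x3) + (b*x2 + c*x3)*x1
          - (b*b + b*c + 2*b*c)*x1^2) -
        ((b + c)*(b*x1^2 + b*x3^2 - x1*x3) + (b*x1 + c*x3)*x2
          - (b*b + 2*b*c + b*c)*x2^2)) := by ring
      rw [h1, h2] at key
      have key' : (b + 2*c) * ((x2 - x1)*(x3 - 2*b*(x1 + x2))) = 0 := by
        rw [key]; ring
      exact (mul_eq_zero.mp key').resolve_left hbc
    refine ⟨hF1, ?_⟩
    have key2 : b * (x2*(x3 - x1) + (b + c)*(x1^2 - x3^2) + (c - b)*x2^2) =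
        (b + c) * ((x2 - x1)*(x3 - 2*b*(x1 + x2))) -
        ((b + c)*(b*x1^2 + b*x3^2 - x1*x3) + (b*x1 + c*x3)*x2
          - (b*b + 2*b*c + b*c)*x2^2) := by ring
    rw [h2, hF1] at key2
    have key2' : b * (x2*(x3 - x1) + (b + c)*(x1^2 - x3^2) + (c - b)*x2^2) = 0 := by
      rw [key2]; ring
    exact (mul_eq_zero.mp key2').resolve_left hbne
  · rintro ⟨h1, h2⟩
    have hE2 : (b + c)*(b*x1^2 + b*x3^2 - x1*x3) + (b*x1 + c*x3)*x2
        - (b*b + 2*b*c + b*c)*x2^2 = 0 := by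
      have key : (b + c)*(b*x1^2 + b*x3^2 - x1*x3) + (b*x1 + c*x3)*x2
          - (b*b + 2*b*c + b*c)*x2^2 =
          (b + c) * ((x2 - x1)*(x3 - 2*b*(x1 + x2))) -
          b * (x2*(x3 - x1) + (b + c)*(x1^2 - x3^2) + (c - b)*x2^2) := by ring
      rw [key, h1, h2]; ring
    refine ⟨?_, hE2⟩
    have key : (b + c)*(b*x2^2 + b*x3^2 - x2*x3) + (b*x2 + c*x3)*x1
        - (b*b + b*c + 2*b*c)*x1^2 =
        ((b + c)*(b*x1^2 + b*x3^2 - x1*x3) + (b*x1 + c*x3)*x2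
          - (b*b + 2*b*c + b*c)*x2^2) -
        (b + 2*c) * ((x2 - x1)*(x3 - 2*b*(x1 + x2))) := by ring
    rw [key, hE2, h1]; ring
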